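/- Over R = Z_p[t,t⁻¹], define V_X = {(f,g,h) ∈ R³ : deg g > deg f and deg g ≥ deg h} and V_Y = {(f,g,h) ∈ R³ : deg h > deg f and deg h > deg g}. Then under the right Burau action of B4: (1) V_X·x ⊆ V_X, V_X·y⁻¹ ⊆ V_X, V_X·(xy) ⊆ V_Y; (2) V_Y·y ⊆ V_Y, V_Y·x⁻¹ ⊆ V_Y, V_Y·(yx) ⊆ V_X. -/

import Mathlib

open LaurentPolynomial

/-- The top degree of a Laurent polynomial, with `deg 0 = ⊥` (i.e. `-∞`). -/
def ldeg {R : Type*} [Semiring R] (f : LaurentPolynomial R) : WithBot ℤ :=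
  f.coeff.support.max

variable (p : ℕ)

/-- Row vectors `(f,g,h)` over `Z_p[t,t⁻¹]`. -/
abbrev V (p : ℕ) := LaurentPolynomial (ZMod p) × LaurentPolynomial (ZMod p) × LaurentPolynomial (ZMod p)

/-- `V_X = {(f,g,h) : deg g > deg f and deg g ≥ deg h}`. -/
def VX (p : ℕ) : Set (V p) := {v | ldeg v.1 < ldeg v.2.1 ∧ ldeg v.2.2 ≤ ldeg v.2.1}

/-- `V_Y = {(f,g,h) : deg h > deg f and deg h > deg g}`. -/
def VY (p : ℕ) : Set (V p) := {v | ldeg v.1 < ldeg v.2.2 ∧ ldeg v.2.1 < ldeg v.2.2}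

noncomputable section

/-- `v·x = (tf+(t²−t)g+(1−t)h, t³g+(1−t²)h, h)` where `x = σ₂σ₁²σ₂`. -/
def actx (v : V p) : V p :=
  (T 1 * v.1 + (T 2 - T 1) * v.2.1 + (1 - T 1) * v.2.2,
   T 3 * v.2.1 + (1 - T 2) * v.2.2, v.2.2)

/-- `v·y = (f, g, tg−th)` where `y = σ₃`. -/
def acty (v : V p) : V p :=
  (v.1, v.2.1, T 1 * v.2.1 - T 1 * v.2.2)

/-- `v·(xy)`. -/
def actxy (v : V p) : V p :=
  (T 1 * v.1 + (T 2 - T 1) * v.2.1 + (1 - T 1) * v.2.2,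
   T 3 * v.2.1 + (1 - T 2) * v.2.2,
   T 4 * v.2.1 - T 3 * v.2.2)

/-- `v·(yx)`. -/
def actyx (v : V p) : V p :=
  (T 1 * v.1 + (T 2 - T 1) * v.2.2,
   T 1 * v.2.1 + (T 3 - T 1) * v.2.2,
   T 1 * v.2.1 - T 1 * v.2.2)

/-- `v·x⁻¹`. -/
def actxinv (v : V p) : V p :=
  (T (-1) * v.1 + (T (-3) - T (-2)) * v.2.1 + (T (-2) - T (-3)) * v.2.2,
   T (-3) * v.2.1 + (T (-2) - T (-3)) * v.2.2, v.2.2)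

/-- `v·y⁻¹`. -/
def actyinv (v : V p) : V p :=
  (v.1, v.2.1, v.2.1 - T (-1) * v.2.2)

end

section Helpers

open AddMonoidAlgebra

namespace LDeg

variable {S : Type*} [CommRing S]

lemma ldeg_eq (f : LaurentPolynomial S) :
    ldeg f = AddMonoidAlgebra.supDegree ((↑) : ℤ → WithBot ℤ) f :=
  Finset.max_eq_sup_withBot _

lemma ldeg_T_le (n : ℤ) : ldeg (T n : LaurentPolynomial S) ≤ (n : WithBot ℤ) :=
  LaurentPolynomial.degree_T_le n

lemma ldeg_mul_le (f g : LaurentPolynomial S) : ldeg (f * g) ≤ ldeg f + ldeg g := by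
  simp only [ldeg_eq]
  exact supDegree_mul_le (fun a b => by push_cast; rfl)

lemma ldeg_add_le (f g : LaurentPolynomial S) : ldeg (f + g) ≤ max (ldeg f) (ldeg g) := by
  simp only [ldeg_eq]; exact supDegree_add_le

lemma ldeg_sub_le (f g : LaurentPolynomial S) : ldeg (f - g) ≤ max (ldeg f) (ldeg g) := by
  simp only [ldeg_eq]; exact supDegree_sub_le

lemma ldeg_neg (f : LaurentPolynomial S) : ldeg (-f) = ldeg f := by
  simp only [ldeg_eq]; exact supDegree_neg

lemma ldeg_add_eq_left {f g : LaurentPolynomial S} (h : ldeg g < ldeg f) :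
    ldeg (f + g) = ldeg f := by
  simp only [ldeg_eq] at *; exact supDegree_add_eq_left h

lemma ldeg_T_mul (n : ℤ) (f : LaurentPolynomial S) :
    ldeg (T n * f) = (n : WithBot ℤ) + ldeg f := by
  refine le_antisymm ((ldeg_mul_le _ _).trans (add_le_add_left (ldeg_T_le n) _)) ?_
  have h1 : f = T (-n) * (T n * f) := by
    rw [← mul_assoc, ← LaurentPolynomial.T_add, neg_add_cancel, LaurentPolynomial.T_zero, one_mul]
  have h2 : ldeg f ≤ ((-n : ℤ) : WithBot ℤ) + ldeg (T n * f) := by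
    nth_rewrite 1 [h1]
    exact (ldeg_mul_le _ _).trans (add_le_add_left (ldeg_T_le (-n)) _)
  calc (n : WithBot ℤ) + ldeg f ≤ (n : WithBot ℤ) + (((-n : ℤ) : WithBot ℤ) + ldeg (T n * f)) :=
        add_le_add_right h2 _
    _ = ldeg (T n * f) := by
        rw [← add_assoc, ← WithBot.coe_add, add_neg_cancel, WithBot.coe_zero, zero_add]

lemma ldeg_T_sub_T_mul_le (a b c : ℤ) (ha : a ≤ c) (hb : b ≤ c) (f : LaurentPolynomial S) :
    ldeg ((T a - T b) * f) ≤ (c : WithBot ℤ) + ldeg f := by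
  refine (ldeg_mul_le _ _).trans (add_le_add_left ?_ _)
  exact (ldeg_sub_le _ _).trans (max_le ((ldeg_T_le a).trans (by exact_mod_cast ha))
    ((ldeg_T_le b).trans (by exact_mod_cast hb)))

lemma ldeg_one_sub_T_mul_le (b c : ℤ) (h0 : 0 ≤ c) (hb : b ≤ c) (f : LaurentPolynomial S) :
    ldeg ((1 - T b) * f) ≤ (c : WithBot ℤ) + ldeg f := by
  rw [show (1 - T b : LaurentPolynomial S) = T 0 - T b by rw [LaurentPolynomial.T_zero]]
  exact ldeg_T_sub_T_mul_le 0 b c h0 hb f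

lemma wb_add_lt_add {a b : ℤ} {x y : WithBot ℤ} (hab : a < b) (h : x ≤ y) (hy : y ≠ ⊥) :
    (a : WithBot ℤ) + x < (b : WithBot ℤ) + y := by
  lift y to ℤ using hy
  induction x with
  | bot => simpa using WithBot.bot_lt_coe (b + y)
  | coe x =>
      rw [← WithBot.coe_add, ← WithBot.coe_add, WithBot.coe_lt_coe]
      have := WithBot.coe_le_coe.mp h
      omega

lemma wb_add_lt_add_right {a : ℤ} {x y : WithBot ℤ} (h : x < y) :
    (a : WithBot ℤ) + x < (a : WithBot ℤ) + y := by
  have hy : y ≠ ⊥ := ne_bot_of_gt h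
  lift y to ℤ using hy
  induction x with
  | bot => simpa using WithBot.bot_lt_coe (a + y)
  | coe x =>
      rw [← WithBot.coe_add, ← WithBot.coe_add, WithBot.coe_lt_coe]
      have := WithBot.coe_lt_coe.mp h
      omega

lemma wb_add_le_add {a b : ℤ} {x y : WithBot ℤ} (hab : a ≤ b) (h : x ≤ y) :
    (a : WithBot ℤ) + x ≤ (b : WithBot ℤ) + y :=
  add_le_add (by exact_mod_cast hab) h

lemma wb_lt_add {b : ℤ} {x y : WithBot ℤ} (hb : 0 < b) (h : x ≤ y) (hy : y ≠ ⊥) :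
    x < (b : WithBot ℤ) + y := by
  simpa using wb_add_lt_add hb h hy

lemma wb_le_add {b : ℤ} {x y : WithBot ℤ} (hb : 0 ≤ b) (h : x ≤ y) :
    x ≤ (b : WithBot ℤ) + y := by
  simpa using wb_add_le_add hb h

lemma wb_add_le {a : ℤ} {x y : WithBot ℤ} (ha : a ≤ 0) (h : x ≤ y) :
    (a : WithBot ℤ) + x ≤ y := by
  simpa using wb_add_le_add ha h

lemma wb_add_lt {a : ℤ} {x y : WithBot ℤ} (ha : a < 0) (h : x ≤ y) (hy : y ≠ ⊥) :
    (a : WithBot ℤ) + x < y := by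
  simpa using wb_add_lt_add ha h hy

end LDeg

end Helpers

open LDeg in
/-- One-step invariances of `V_X` and `V_Y` under the right Burau action. -/
theorem VX_VY_invariances (p : ℕ) (hp : 2 ≤ p) :
    (∀ v ∈ VX p, actx p v ∈ VX p) ∧
    (∀ v ∈ VX p, actyinv p v ∈ VX p) ∧
    (∀ v ∈ VX p, actxy p v ∈ VY p) ∧
    (∀ v ∈ VY p, acty p v ∈ VY p) ∧
    (∀ v ∈ VY p, actxinv p v ∈ VY p) ∧
    (∀ v ∈ VY p, actyx p v ∈ VX p) := by
  refine ⟨?_, ?_, ?_, ?_, ?_, ?_⟩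
  -- (1) VX · x ⊆ VX
  · rintro ⟨f, g, h⟩ ⟨h1, h2⟩
    simp only [VX, Set.mem_setOf_eq] at h1 h2 ⊢
    simp only [actx]
    have hgb : ldeg g ≠ ⊥ := ne_bot_of_gt h1
    have hG : ldeg (T 3 * g + (1 - T 2) * h) = ((3 : ℤ) : WithBot ℤ) + ldeg g := by
      rw [ldeg_add_eq_left, ldeg_T_mul]
      rw [ldeg_T_mul]
      exact lt_of_le_of_lt (ldeg_one_sub_T_mul_le 2 2 (by norm_num) le_rfl h)
        (wb_add_lt_add (by norm_num) h2 hgb)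
    constructor
    · rw [hG]
      refine lt_of_le_of_lt ((ldeg_add_le _ _).trans (max_le_max (ldeg_add_le _ _) le_rfl)) ?_
      refine max_lt (max_lt ?_ ?_) ?_
      · rw [ldeg_T_mul]; exact wb_add_lt_add (by norm_num) h1.le hgb
      · exact lt_of_le_of_lt (ldeg_T_sub_T_mul_le 2 1 2 le_rfl (by norm_num) g)
          (wb_add_lt_add (by norm_num) le_rfl hgb)
      · exact lt_of_le_of_lt (ldeg_one_sub_T_mul_le 1 1 (by norm_num) le_rfl h)
          (wb_add_lt_add (by norm_num) h2 hgb)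
    · rw [hG]; exact wb_le_add (by norm_num) h2
  -- (2) VX · y⁻¹ ⊆ VX
  · rintro ⟨f, g, h⟩ ⟨h1, h2⟩
    simp only [VX, Set.mem_setOf_eq] at h1 h2 ⊢
    simp only [actyinv]
    refine ⟨h1, (ldeg_sub_le _ _).trans (max_le le_rfl ?_)⟩
    rw [ldeg_T_mul]
    exact wb_add_le (by norm_num) h2
  -- (3) VX · (xy) ⊆ VY
  · rintro ⟨f, g, h⟩ ⟨h1, h2⟩
    simp only [VX, Set.mem_setOf_eq] at h1 h2
    simp only [VY, Set.mem_setOf_eq, actxy]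
    have hgb : ldeg g ≠ ⊥ := ne_bot_of_gt h1
    have hH : ldeg (T 4 * g - T 3 * h) = ((4 : ℤ) : WithBot ℤ) + ldeg g := by
      rw [sub_eq_add_neg, ldeg_add_eq_left, ldeg_T_mul]
      rw [ldeg_neg, ldeg_T_mul, ldeg_T_mul]
      exact wb_add_lt_add (by norm_num) h2 hgb
    constructor
    · rw [hH]
      refine lt_of_le_of_lt ((ldeg_add_le _ _).trans (max_le_max (ldeg_add_le _ _) le_rfl)) ?_
      refine max_lt (max_lt ?_ ?_) ?_
      · rw [ldeg_T_mul]; exact wb_add_lt_add (by norm_num) h1.le hgb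
      · exact lt_of_le_of_lt (ldeg_T_sub_T_mul_le 2 1 2 le_rfl (by norm_num) g)
          (wb_add_lt_add (by norm_num) le_rfl hgb)
      · exact lt_of_le_of_lt (ldeg_one_sub_T_mul_le 1 1 (by norm_num) le_rfl h)
          (wb_add_lt_add (by norm_num) h2 hgb)
    · rw [hH]
      refine lt_of_le_of_lt (ldeg_add_le _ _) (max_lt ?_ ?_)
      · rw [ldeg_T_mul]; exact wb_add_lt_add (by norm_num) le_rfl hgb
      · exact lt_of_le_of_lt (ldeg_one_sub_T_mul_le 2 2 (by norm_num) le_rfl h)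
          (wb_add_lt_add (by norm_num) h2 hgb)
  -- (4) VY · y ⊆ VY
  · rintro ⟨f, g, h⟩ ⟨h1, h2⟩
    simp only [VY, Set.mem_setOf_eq] at h1 h2 ⊢
    simp only [acty]
    have hhb : ldeg h ≠ ⊥ := ne_bot_of_gt h1
    have hH : ldeg (T 1 * g - T 1 * h) = ((1 : ℤ) : WithBot ℤ) + ldeg h := by
      rw [sub_eq_add_neg, add_comm, ldeg_add_eq_left, ldeg_neg, ldeg_T_mul]
      rw [ldeg_neg, ldeg_T_mul, ldeg_T_mul]
      exact wb_add_lt_add_right h2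
    exact ⟨by rw [hH]; exact wb_lt_add (by norm_num) h1.le hhb,
      by rw [hH]; exact wb_lt_add (by norm_num) h2.le hhb⟩
  -- (5) VY · x⁻¹ ⊆ VY
  · rintro ⟨f, g, h⟩ ⟨h1, h2⟩
    simp only [VY, Set.mem_setOf_eq] at h1 h2 ⊢
    simp only [actxinv]
    have hhb : ldeg h ≠ ⊥ := ne_bot_of_gt h1
    constructor
    · refine lt_of_le_of_lt ((ldeg_add_le _ _).trans (max_le_max (ldeg_add_le _ _) le_rfl)) ?_
      refine max_lt (max_lt ?_ ?_) ?_
      · rw [ldeg_T_mul]; exact wb_add_lt (by norm_num) h1.le hhb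
      · exact lt_of_le_of_lt (ldeg_T_sub_T_mul_le (-3) (-2) (-2) (by norm_num) le_rfl g)
          (wb_add_lt (by norm_num) h2.le hhb)
      · exact lt_of_le_of_lt (ldeg_T_sub_T_mul_le (-2) (-3) (-2) le_rfl (by norm_num) h)
          (wb_add_lt (by norm_num) le_rfl hhb)
    · refine lt_of_le_of_lt (ldeg_add_le _ _) (max_lt ?_ ?_)
      · rw [ldeg_T_mul]; exact wb_add_lt (by norm_num) h2.le hhb
      · exact lt_of_le_of_lt (ldeg_T_sub_T_mul_le (-2) (-3) (-2) le_rfl (by norm_num) h)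
          (wb_add_lt (by norm_num) le_rfl hhb)
  -- (6) VY · (yx) ⊆ VX
  · rintro ⟨f, g, h⟩ ⟨h1, h2⟩
    simp only [VY, Set.mem_setOf_eq] at h1 h2
    simp only [VX, Set.mem_setOf_eq, actyx]
    have hhb : ldeg h ≠ ⊥ := ne_bot_of_gt h1
    have hre : T 1 * g + (T 3 - T 1) * h = T 3 * h + (T 1 * g - T 1 * h) := by ring
    have hG : ldeg (T 1 * g + (T 3 - T 1) * h) = ((3 : ℤ) : WithBot ℤ) + ldeg h := by
      rw [hre, ldeg_add_eq_left, ldeg_T_mul]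
      rw [ldeg_T_mul]
      refine lt_of_le_of_lt ((ldeg_sub_le _ _).trans (max_le_max (ldeg_T_mul 1 g).le
        (ldeg_T_mul 1 h).le)) (max_lt ?_ ?_)
      · exact wb_add_lt_add (by norm_num) h2.le hhb
      · exact wb_add_lt_add (by norm_num) le_rfl hhb
    constructor
    · rw [hG]
      refine lt_of_le_of_lt (ldeg_add_le _ _) (max_lt ?_ ?_)
      · rw [ldeg_T_mul]; exact wb_add_lt_add (by norm_num) h1.le hhb
      · exact lt_of_le_of_lt (ldeg_T_sub_T_mul_le 2 1 2 le_rfl (by norm_num) h)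
          (wb_add_lt_add (by norm_num) le_rfl hhb)
    · rw [hG]
      refine (ldeg_sub_le _ _).trans (max_le ?_ ?_)
      · rw [ldeg_T_mul]; exact wb_add_le_add (by norm_num) h2.le
      · rw [ldeg_T_mul]; exact wb_add_le_add (by norm_num) le_rfl
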